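/- For each r ≥ 2, each facet F_j = {x ∈ ℝ₊^r : x_j = 0} of the cone ℝ₊^r is unimodular with respect to the lattice L = gp(M_r) = {a ∈ ℤ^r : a₁ ≡ ⋯ ≡ a_r mod r}: that is, the monoid F_j ∩ L is generated by a subset of a ℤ-basis of L. However, the full cone ℝ₊^r is not unimodular with respect to L, i.e., ℝ₊^r ∩ L is not generated by part of a basis of L. -/

import Mathlib

/-!
`gp(M_r)` is the lattice `L` of integer vectors whose coordinates are all congruent mod `r`.
For each `j`, the vectors `(1,…,1)` and `r • eᵢ` (`i ≠ j`) form a ℤ-basis of `L`, and the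
lattice points of the facet `x_j = 0` are the nonnegative combinations of the `r • eᵢ`, `i ≠ j`.
In the monoid `ℝ₊^r ∩ L`, on the other hand, the `r + 1` vectors `(1,…,1)` and `r • eᵢ` are
irreducible (a coordinatewise smaller nonzero point of `L` would have coordinates that differ by
less than `r` without being all equal), so they lie in every generating set, while part of a basis
of `L` has at most `r` elements.
-/

open scoped NNReal
noncomputable section

/-- Real image of an integer vector. -/
def toR {r : ℕ} (v : Fin r → ℤ) : Fin r → ℝ := fun i => (v i : ℝ)

/-- The group of differences of a submonoid of an abelian group. -/
def gp {G : Type*} [AddCommGroup G] (M : AddSubmonoid G) : AddSubgroup G :=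
  AddSubgroup.closure (M : Set G)

/-- `M` is normal: `c • x ∈ M` for `x ∈ gp M`, `c ≥ 1` implies `x ∈ M`. -/
def IsNormalMonoid {G : Type*} [AddCommGroup G] (M : AddSubmonoid G) : Prop :=
  ∀ (c : ℕ) (x : G), 0 < c → x ∈ gp M → (c : ℤ) • x ∈ M → x ∈ M

/-- `M` is positive: no nontrivial units. -/
def IsPositiveMonoid {G : Type*} [AddCommGroup G] (M : AddSubmonoid G) : Prop :=
  ∀ x ∈ M, -x ∈ M → x = 0

/-- The cone `ℝ₊M ⊆ ℝ^r` spanned by a submonoid `M ⊆ ℤ^r`. -/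
def coneM {r : ℕ} (M : AddSubmonoid (Fin r → ℤ)) : Set (Fin r → ℝ) :=
  (Submodule.span ℝ≥0 (toR '' (M : Set (Fin r → ℤ))) : Submodule ℝ≥0 (Fin r → ℝ))

/-- The distinguished vector `e = (1,0) ∈ ℤ ⊕ ℤ^r`. -/
def eVec (r : ℕ) : ℤ × (Fin r → ℤ) := (1, 0)

/-- `M_i = (ℝ ⊕ ℝ₊M) ∩ (ℤ(x₁ - ie) + ⋯ + ℤ(x_r - ie))`, with `x_j - ie = (-i, x_j)`. -/
def Mi {r : ℕ} (M : AddSubmonoid (Fin r → ℤ)) (x : Fin r → (Fin r → ℤ)) (i : ℕ) :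
    Set (ℤ × (Fin r → ℤ)) :=
  {p | p ∈ AddSubgroup.closure (Set.range fun j => ((-(i : ℤ), x j) : ℤ × (Fin r → ℤ))) ∧
       toR p.2 ∈ coneM M}

/-- The submonoid (as a set) `ℤ₊e + M_i`. -/
def ZeMi {r : ℕ} (M : AddSubmonoid (Fin r → ℤ)) (x : Fin r → (Fin r → ℤ)) (i : ℕ) :
    Set (ℤ × (Fin r → ℤ)) :=
  {p | ∃ (z : ℕ) (m : ℤ × (Fin r → ℤ)), m ∈ Mi M x i ∧ p = (z : ℤ) • eVec r + m}

/-- The monoid `M_r = ℤ₊(1,…,1) + Σ_j ℤ₊(r·e_j) ⊆ ℤ₊^r`. -/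
def Mr (r : ℕ) : AddSubmonoid (Fin r → ℤ) :=
  AddSubmonoid.closure
    ({fun _ => 1} ∪ Set.range fun j : Fin r => (r : ℤ) • Pi.single j (1 : ℤ))

/-- A set `T` of lattice points is unimodular w.r.t. the lattice `L` if, as a monoid, it
is generated by part of a ℤ-basis of `L`. -/
def Unimod {r : ℕ} (L : AddSubgroup (Fin r → ℤ)) (T : Set (Fin r → ℤ)) : Prop :=
  ∃ (bb : Module.Basis (Fin r) ℤ L) (S : Set (Fin r)),
    T = ((AddSubmonoid.closure ((fun i => ((bb i : L) : Fin r → ℤ)) '' S)) :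
      Set (Fin r → ℤ))

theorem AddSubmonoid.mem_of_mem_closure_of_irreducible {M : Type*} [AddMonoid M] {s : Set M}
    {x : M} (hx : x ∈ closure s) (hx0 : x ≠ 0)
    (hirr : ∀ a ∈ closure s, ∀ b ∈ closure s, a + b = x → a = 0 ∨ b = 0) : x ∈ s := by
  by_contra hxs
  -- Removing `x` from `closure s` leaves a submonoid still containing `s`.
  let N : AddSubmonoid M :=
    { carrier := (closure s : Set M) \ {x}
      zero_mem' := ⟨zero_mem _, Ne.symm hx0⟩
      add_mem' := fun {a b} ha hb => ⟨add_mem ha.1 hb.1, fun hab => by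
        rcases hirr a ha.1 b hb.1 hab with rfl | rfl
        · exact hb.2 (by simpa using hab)
        · exact ha.2 (by simpa using hab)⟩ }
  have hsN : closure s ≤ N := closure_le.2 fun y hy => ⟨subset_closure hy, fun h => hxs (h ▸ hy)⟩
  exact (hsN hx).2 rfl

theorem mem_gp_of_mem {G : Type*} [AddCommGroup G] {M : AddSubmonoid G} {x : G} (hx : x ∈ M) :
    x ∈ gp M :=
  AddSubgroup.subset_closure hx

theorem ones_mem_Mr (r : ℕ) : (fun _ => 1) ∈ Mr r :=
  AddSubmonoid.subset_closure (Or.inl rfl)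

theorem smul_single_mem_Mr {r : ℕ} (i : Fin r) : (r : ℤ) • Pi.single i 1 ∈ Mr r :=
  AddSubmonoid.subset_closure (Or.inr ⟨i, rfl⟩)

def modLattice (r : ℕ) : AddSubgroup (Fin r → ℤ) where
  carrier := {v | ∀ i j, v i ≡ v j [ZMOD r]}
  add_mem' ha hb i j := (ha i j).add (hb i j)
  zero_mem' _ _ := rfl
  neg_mem' ha i j := (ha i j).neg

section modLattice

variable {r : ℕ}

theorem const_add_mul_mem_modLattice (a : ℤ) (w : Fin r → ℤ) :
    (fun k => a + r * w k) ∈ modLattice r := fun i j => by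
  simp [Int.ModEq]

theorem eq_add_mul_of_mem_modLattice {v : Fin r → ℤ} (hv : v ∈ modLattice r) (j k : Fin r) :
    v k = v j + r * ((v k - v j) / r) := by
  rw [Int.mul_ediv_cancel' (hv j k).dvd]; ring

theorem dvd_of_mem_modLattice {v : Fin r → ℤ} (hv : v ∈ modLattice r) {k : Fin r}
    (hk : v k = 0) (l : Fin r) : (r : ℤ) ∣ v l := by
  simpa [hk] using (hv k l).dvd

theorem smul_single_mem_modLattice (i : Fin r) : (r : ℤ) • Pi.single i 1 ∈ modLattice r := by
  have hi : (r : ℤ) • Pi.single i 1 = fun k => 0 + (r : ℤ) * (Pi.single i 1 : Fin r → ℤ) k := by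
    funext k; simp
  exact hi ▸ const_add_mul_mem_modLattice 0 (Pi.single i 1)

theorem gp_Mr_eq_modLattice (r : ℕ) : gp (Mr r) = modLattice r := by
  refine le_antisymm ((AddSubgroup.closure_le _).2 ?_) fun v hv => ?_
  · change Mr r ≤ (modLattice r).toAddSubmonoid
    refine AddSubmonoid.closure_le.2 ?_
    rintro _ (rfl | ⟨i, rfl⟩) <;> simp only [AddSubgroup.coe_toAddSubmonoid, SetLike.mem_coe]
    · exact fun _ _ => rfl
    · exact smul_single_mem_modLattice i
  · rcases isEmpty_or_nonempty (Fin r) with _ | ⟨⟨j⟩⟩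
    · rw [Subsingleton.elim v 0]; exact zero_mem _
    have hv_eq : v = v j • (fun _ => 1) + ∑ i, ((v i - v j) / r) • ((r : ℤ) • Pi.single i 1) := by
      funext k
      simpa [Finset.sum_apply, Pi.single_apply, mul_comm] using eq_add_mul_of_mem_modLattice hv j k
    rw [hv_eq]
    exact add_mem (zsmul_mem (mem_gp_of_mem (ones_mem_Mr r)) _)
      (sum_mem fun i _ => zsmul_mem (mem_gp_of_mem (smul_single_mem_Mr i)) _)

end modLattice

section facet

variable {r : ℕ} (j : Fin r)

def facetCoordMap : (Fin r → ℤ) →ₗ[ℤ] modLattice r where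
  toFun c := ⟨fun k => c j + r * if k = j then 0 else c k, const_add_mul_mem_modLattice _ _⟩
  map_add' a b := by
    ext k
    simp only [Pi.add_apply, AddMemClass.mk_add_mk]
    split_ifs <;> ring
  map_smul' z a := by
    ext k
    simp only [RingHom.id_apply, AddSubgroupClass.coe_zsmul, Pi.smul_apply, smul_eq_mul]
    split_ifs <;> ring

theorem facetCoordMap_bijective : Function.Bijective (facetCoordMap j) := by
  have hr : r ≠ 0 := j.pos.ne'
  refine ⟨fun a b hab => funext fun k => ?_, fun ⟨v, hv⟩ => ?_⟩
  · have hj : a j = b j := by simpa [facetCoordMap] using congr_fun (congr_arg Subtype.val hab) j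
    by_cases hk : k = j
    · rwa [hk]
    · simpa [facetCoordMap, hk, hj, hr] using congr_fun (congr_arg Subtype.val hab) k
  · refine ⟨fun k => if k = j then v j else (v k - v j) / r, Subtype.ext (funext fun k => ?_)⟩
    by_cases hk : k = j
    · simp [facetCoordMap, hk]
    · simpa [facetCoordMap, hk] using (eq_add_mul_of_mem_modLattice hv j k).symm

def facetBasis : Module.Basis (Fin r) ℤ (modLattice r) :=
  (Pi.basisFun ℤ (Fin r)).map (LinearEquiv.ofBijective _ (facetCoordMap_bijective j))

theorem facetBasis_apply_of_ne {i : Fin r} (hij : i ≠ j) :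
    (facetBasis j i : Fin r → ℤ) = (r : ℤ) • Pi.single i 1 := by
  funext k
  by_cases hk : k = i
  · subst hk; simp [facetBasis, facetCoordMap, hij]
  · simp [facetBasis, facetCoordMap, hk, Pi.single_apply, hij.symm]

end facet

theorem modLattice_facet_eq_closure {r : ℕ} (j : Fin r) :
    {v : Fin r → ℤ | v ∈ modLattice r ∧ (∀ i, 0 ≤ v i) ∧ v j = 0} =
      (AddSubmonoid.closure ((fun i => (r : ℤ) • (Pi.single i 1 : Fin r → ℤ)) '' {i | i ≠ j}) :
        Set (Fin r → ℤ)) := by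
  ext v
  constructor
  · rintro ⟨hv, hv0, hvj⟩
    rw [SetLike.mem_coe, ← Finset.univ_sum_single v]
    refine sum_mem fun i _ => ?_
    by_cases hij : i = j
    · simp [hij, hvj]
    obtain ⟨c, hc⟩ := dvd_of_mem_modLattice hv hvj i
    have hr : (0 : ℤ) < r := by have := j.pos; omega
    lift c to ℕ using by nlinarith [hv0 i]
    have hterm : Pi.single i (v i) = c • ((r : ℤ) • (Pi.single i 1 : Fin r → ℤ)) := by
      funext k; by_cases hk : k = i <;> simp [hk, hc, mul_comm]
    rw [hterm]
    exact nsmul_mem (AddSubmonoid.subset_closure (Set.mem_image_of_mem _ hij)) c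
  · intro hv
    induction hv using AddSubmonoid.closure_induction with
    | mem _ h =>
      obtain ⟨i, hij, rfl⟩ := h
      refine ⟨smul_single_mem_modLattice i, fun k => ?_, by simp [Ne.symm hij]⟩
      by_cases hk : k = i <;> simp [hk]
    | zero => exact ⟨zero_mem _, fun _ => le_rfl, rfl⟩
    | add a b _ _ ha hb =>
      exact show _ ∧ _ ∧ _ from ⟨add_mem ha.1 hb.1, fun k => add_nonneg (ha.2.1 k) (hb.2.1 k),
        by simp [ha.2.2, hb.2.2]⟩

theorem unimod_modLattice_facet {r : ℕ} (j : Fin r) :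
    Unimod (modLattice r) {v | v ∈ modLattice r ∧ (∀ i, 0 ≤ v i) ∧ v j = 0} := by
  refine ⟨facetBasis j, {i | i ≠ j}, ?_⟩
  have himage : (fun i => (facetBasis j i : Fin r → ℤ)) '' {i | i ≠ j} =
      (fun i => (r : ℤ) • (Pi.single i 1 : Fin r → ℤ)) '' {i | i ≠ j} :=
    Set.image_congr fun i hij => facetBasis_apply_of_ne j hij
  rw [himage, modLattice_facet_eq_closure]

section nonneg

variable {r : ℕ} {a b : Fin r → ℤ}

theorem eq_zero_or_eq_zero_of_add_eq_one (ha : a ∈ modLattice r) (ha0 : ∀ i, 0 ≤ a i)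
    (hb0 : ∀ i, 0 ≤ b i) (hr : 2 ≤ r) (hab : a + b = fun _ => 1) : a = 0 ∨ b = 0 := by
  have hab' : ∀ k, a k + b k = 1 := fun k => congr_fun hab k
  by_cases h : ∃ k, a k = 0
  · obtain ⟨k, hk⟩ := h
    left
    funext l
    have : a l < r := by have := hab' l; have := hb0 l; omega
    exact Int.eq_zero_of_dvd_of_nonneg_of_lt (ha0 l) this (dvd_of_mem_modLattice ha hk l)
  · right
    funext l
    have := hab' l; have := ha0 l; have := hb0 l; have := not_exists.1 h l
    simp only [Pi.zero_apply]; omega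

theorem eq_zero_or_eq_zero_of_add_eq_smul_single (ha : a ∈ modLattice r) (ha0 : ∀ i, 0 ≤ a i)
    (hb0 : ∀ i, 0 ≤ b i) (hr : 2 ≤ r) {i : Fin r} (hab : a + b = (r : ℤ) • Pi.single i 1) :
    a = 0 ∨ b = 0 := by
  have hoff : ∀ k ≠ i, a k = 0 ∧ b k = 0 := fun k hk => by
    have hsum := congr_fun hab k
    simp [hk] at hsum
    have := ha0 k; have := hb0 k; omega
  have hi : a i + b i = r := by simpa using congr_fun hab i
  have : Nontrivial (Fin r) := Fin.nontrivial_iff_two_le.2 hr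
  obtain ⟨k, hk⟩ := exists_ne i
  by_cases hai : a i = 0
  · left
    funext l
    by_cases hl : l = i
    · rwa [hl]
    · exact (hoff l hl).1
  · right
    have : (r : ℤ) ≤ a i := Int.le_of_dvd (lt_of_le_of_ne (ha0 i) (Ne.symm hai))
      (dvd_of_mem_modLattice ha (hoff k hk).1 i)
    funext l
    by_cases hl : l = i
    · subst hl; have := hb0 l; simp only [Pi.zero_apply]; omega
    · exact (hoff l hl).2

end nonneg

theorem not_unimod_modLattice_nonneg {r : ℕ} (hr : 2 ≤ r) :
    ¬ Unimod (modLattice r) {v | v ∈ modLattice r ∧ ∀ i, 0 ≤ v i} := by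
  rintro ⟨b, S, hT⟩
  have : Nontrivial (Fin r) := Fin.nontrivial_iff_two_le.2 hr
  have hmem (v : Fin r → ℤ) :
      v ∈ AddSubmonoid.closure ((fun i => (b i : Fin r → ℤ)) '' S) ↔
        v ∈ modLattice r ∧ ∀ i, 0 ≤ v i :=
    (Set.ext_iff.1 hT v).symm
  have exists_basis_eq_of_irreducible {x : Fin r → ℤ} (hx : x ∈ modLattice r) (hx0 : ∀ i, 0 ≤ x i) (hne : x ≠ 0)
      (hirr : ∀ a c, a ∈ modLattice r → (∀ i, 0 ≤ a i) → (∀ i, 0 ≤ c i) → a + c = x →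
        a = 0 ∨ c = 0) :
      ∃ k, (b k : Fin r → ℤ) = x := by
    obtain ⟨k, -, hk⟩ := AddSubmonoid.mem_of_mem_closure_of_irreducible ((hmem x).2 ⟨hx, hx0⟩)
      hne fun a ha c hc => hirr a c ((hmem a).1 ha).1 ((hmem a).1 ha).2 ((hmem c).1 hc).2
    exact ⟨k, hk⟩
  obtain ⟨i₀⟩ : Nonempty (Fin r) := inferInstance
  obtain ⟨k₀, hk₀⟩ := exists_basis_eq_of_irreducible (x := fun _ => 1) (fun _ _ => rfl) (fun _ => zero_le_one)
    (fun h => by simpa using congr_fun h i₀)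
    fun a c ha ha0 hc0 => eq_zero_or_eq_zero_of_add_eq_one ha ha0 hc0 hr
  choose σ hσ using fun i : Fin r => exists_basis_eq_of_irreducible (smul_single_mem_modLattice i)
    (fun k => by by_cases hk : k = i <;> simp [hk])
    (fun h => by have := congr_fun h i; simp at this; omega)
    fun a c ha ha0 hc0 => eq_zero_or_eq_zero_of_add_eq_smul_single ha ha0 hc0 hr
  have hσ_inj : Function.Injective σ := fun i i' h => by
    by_contra hne
    have := congr_fun ((hσ i).symm.trans (h ▸ hσ i')) i
    simp [hne] at this; omega
  -- `b` has only `r` indices but must hit the `r + 1` vectors `1` and `r • eᵢ`.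
  obtain ⟨i, rfl⟩ := Finite.surjective_of_injective hσ_inj k₀
  obtain ⟨k, hk⟩ := exists_ne i
  simpa [hk] using congr_fun (hk₀.symm.trans (hσ i)) k

/-- each facet `{x ∈ ℝ₊^r : x_j = 0}` of ℝ₊^r is unimodular with respect to
the lattice `L = gp(M_r)`, but the full cone ℝ₊^r is not. -/
theorem statement13 (r : ℕ) (hr : 2 ≤ r) :
    (∀ j : Fin r, Unimod (gp (Mr r))
      {v : Fin r → ℤ | v ∈ gp (Mr r) ∧ (∀ i, 0 ≤ v i) ∧ v j = 0}) ∧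
    ¬ Unimod (gp (Mr r)) {v : Fin r → ℤ | v ∈ gp (Mr r) ∧ ∀ i, 0 ≤ v i} := by
  rw [gp_Mr_eq_modLattice]
  exact ⟨unimod_modLattice_facet, not_unimod_modLattice_nonneg hr⟩
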